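/- arXiv:1602.09088 — 7 statements merged into one kernel-verified Lean document; each statement's English description precedes it below -/
import Mathlib

section
/- Every Fisher market equilibrium with unit budgets and Leontief utilities given by the demand vectors v_i is a CAEI for the corresponding fair division problem with single minded agents: if (x, p) satisfies market clearing and each agent's Leontief-optimal bundle condition, then each agent i's bundle x_i is optimal for the single minded valuation V_i among all bundles y with p · y ≤ 1. -/
open Finset in
/-- A Fisher market equilibrium with unit budgets and Leontief utilities is a CAEI for
single minded agents. -/
theorem leontief_equilibrium_is_caei (n m : ℕ)
    (v x : Fin n → Fin m → ℝ) (p : Fin m → ℝ)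
    (hv : ∀ i j, 0 ≤ v i j ∧ v i j ≤ 1)
    (hne : ∀ i, (Finset.univ.filter fun j => 0 < v i j).Nonempty)
    (u : Fin n → (Fin m → ℝ) → ℝ)
    (hu : ∀ i z, u i z = (Finset.univ.filter fun j => 0 < v i j).inf' (hne i)
      (fun j => z j / v i j))
    (V : Fin n → (Fin m → ℝ) → ℝ)
    (hV : ∀ i z, V i z = if ∀ j, v i j ≤ z j then (1 : ℝ) else 0)
    (hp : ∀ j, 0 ≤ p j)
    (hx0 : ∀ i j, 0 ≤ x i j)
    (hbudget : ∀ i, ∑ j, p j * x i j ≤ 1)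
    (hLopt : ∀ i (y : Fin m → ℝ), (∀ j, 0 ≤ y j) → ∑ j, p j * y j ≤ 1 →
      u i y ≤ u i (x i))
    (hclear : ∀ j, (∑ i, x i j ≤ 1) ∧ (0 < p j → ∑ i, x i j = 1)) :
    ∀ i (y : Fin m → ℝ), (∀ j, 0 ≤ y j ∧ y j ≤ 1) → ∑ j, p j * y j ≤ 1 →
      V i y ≤ V i (x i) := by
  intro i y hy hby
  rw [hV, hV]
  by_cases hcov : ∀ j, v i j ≤ y j
  · have h1 : (1:ℝ) ≤ u i y := by
      rw [hu]
      apply Finset.le_inf'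
      intro j hj
      rw [Finset.mem_filter] at hj
      exact (one_le_div hj.2).mpr (hcov j)
    have h2 : (1:ℝ) ≤ u i (x i) :=
      h1.trans (hLopt i y (fun j => (hy j).1) hby)
    have hxcov : ∀ j, v i j ≤ x i j := by
      intro j
      rcases lt_or_eq_of_le (hv i j).1 with hpos | heq
      · rw [hu] at h2
        have := Finset.inf'_le (fun j => x i j / v i j)
          (by simp [hpos] : j ∈ Finset.univ.filter fun j => 0 < v i j)
        exact (one_le_div hpos).mp (le_trans h2 this)
      · rw [← heq]; exact hx0 i j
    simp [hcov, hxcov]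
  · simp only [hcov, if_false]
    split <;> norm_num
end

section
/- In the fair division problem with discrete goods and single minded agents, a CAEI solution exists if and only if for every item j, the number of agents whose demand set is the singleton {j} is at most Q_j. -/
open Finset

/-!
If a CAEI exists, every price is at most `1`, since some agent holds a copy of the item and pays
for it. An agent demanding only `{j}` can therefore afford `j`, so it must hold a copy of `j`.

Conversely, close the empty set greedily under adding an item `j` wanted by more than `Q j` agents
whose demand sets avoid the items already chosen, and call the final set `E`. Price the items of
`E` at `1` and the others at a small `δ > 0`. Agents whose demand sets avoid `E`, and singleton
agents, receive their demand sets. The other agents meeting `E` are blocked, because their sets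
cost at least `1 + δ`. Counting along the closure gives at least `#E` more blocked agents than
leftover copies of items of `E`. So every leftover copy goes to its own blocked agent, and the
leftover cheap copies go to agents that hold no item of price `1`; these agents can afford them
because `δ` is small.
-/

/-- 0/1 single minded value of a discrete bundle `y` for demand set `D`. -/
noncomputable def discreteValue {m : ℕ} (D : Finset (Fin m)) (y : Fin m → ℕ) : ℝ :=
  if ∀ j ∈ D, 1 ≤ y j then 1 else 0

/-- CAEI for discrete goods. -/
def IsDiscreteCAEI {n m : ℕ} (Q : Fin m → ℕ) (D : Fin n → Finset (Fin m))
    (p : Fin m → ℝ) (x : Fin n → Fin m → ℕ) : Prop :=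
  (∀ j, 0 ≤ p j) ∧
  (∀ j, ∑ i, x i j = Q j) ∧
  (∀ i, ∑ j, p j * (x i j : ℝ) ≤ 1) ∧
  (∀ i (y : Fin m → ℕ), ∑ j, p j * (y j : ℝ) ≤ 1 →
    discreteValue (D i) y ≤ discreteValue (D i) (x i))

lemma Finset.eq_singleton_of_mem_of_card_le_one {α : Type*} {s : Finset α} {j : α} (hj : j ∈ s)
    (hs : #s ≤ 1) : s = {j} :=
  eq_singleton_iff_unique_mem.2 ⟨hj, fun k hk => card_le_one.1 hs k hk j hj⟩

section Cost

variable {α : Type*} [Fintype α] {p : α → ℝ}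

def bundleCost (p : α → ℝ) (y : α → ℕ) : ℝ := ∑ j, p j * y j

lemma bundleCost_add (y z : α → ℕ) : bundleCost p (y + z) = bundleCost p y + bundleCost p z := by
  simp [bundleCost, mul_add, sum_add_distrib]

lemma bundleCost_indicator [DecidableEq α] (S : Finset α) :
    bundleCost p (fun j => if j ∈ S then 1 else 0) = ∑ j ∈ S, p j := by
  simp [bundleCost]

lemma sum_le_bundleCost (hp : ∀ j, 0 ≤ p j) {S : Finset α} {y : α → ℕ} (hy : ∀ j ∈ S, 1 ≤ y j) :
    ∑ j ∈ S, p j ≤ bundleCost p y :=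
  calc ∑ j ∈ S, p j ≤ ∑ j ∈ S, p j * y j :=
        sum_le_sum fun j hj => le_mul_of_one_le_right (hp j) (by exact_mod_cast hy j hj)
    _ ≤ bundleCost p y :=
        sum_le_sum_of_subset_of_nonneg (subset_univ S) fun j _ _ =>
          mul_nonneg (hp j) (Nat.cast_nonneg _)

end Cost

variable {ι α : Type*} [Fintype ι] [DecidableEq α]

section Closure

variable (D : ι → Finset α)

def singletonAgents (j : α) : Finset ι := {i | D i = {j}}

def blockedAgents (E : Finset α) : Finset ι := {i | ¬Disjoint (D i) E ∧ 1 < #(D i)}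

def avoidingDemand (E : Finset α) (j : α) : Finset ι := {i | j ∈ D i ∧ Disjoint (D i) E}

def unblockedDemand [DecidableEq ι] (E : Finset α) (j : α) : Finset ι :=
  {i | i ∉ blockedAgents D E ∧ j ∈ D i}

/-- Invariant of the greedy closure: the `Q j + 1` agents that overdemanded each item `j ∈ E` are
accounted for by its singleton agents and by the agents that `E` blocks. -/
def IsOverdemanded (Q : α → ℕ) (E : Finset α) : Prop :=
  ∑ j ∈ E, (Q j + 1) ≤ ∑ j ∈ E, #(singletonAgents D j) + #(blockedAgents D E)

variable {D}

@[simp]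
lemma mem_blockedAgents {E : Finset α} {i : ι} :
    i ∈ blockedAgents D E ↔ ¬Disjoint (D i) E ∧ 1 < #(D i) := by
  simp [blockedAgents]

lemma blockedAgents_mono {E F : Finset α} (h : E ⊆ F) : blockedAgents D E ⊆ blockedAgents D F := by
  intro i
  simp only [mem_blockedAgents]
  exact fun hi => ⟨fun hd => hi.1 (hd.mono_right h), hi.2⟩

lemma IsOverdemanded.insert_of_lt [DecidableEq ι] {Q : α → ℕ} {E : Finset α} {j : α}
    (hE : IsOverdemanded D Q E) (hj : j ∉ E) (hover : Q j < #(avoidingDemand D E j)) :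
    IsOverdemanded D Q (insert j E) := by
  set W := (avoidingDemand D E j).filter fun i => 1 < #(D i)
  have hsplit : #(avoidingDemand D E j) ≤ #(singletonAgents D j) + #W := by
    rw [← card_filter_add_card_filter_not (s := avoidingDemand D E j) fun i => 1 < #(D i),
      add_comm]
    gcongr
    intro i
    simp only [avoidingDemand, singletonAgents, mem_filter, mem_univ, true_and, not_lt]
    exact fun ⟨⟨hjD, _⟩, hcard⟩ => eq_singleton_of_mem_of_card_le_one hjD hcard
  have hW : #(blockedAgents D E) + #W ≤ #(blockedAgents D (insert j E)) := by
    rw [← card_union_of_disjoint]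
    · refine card_le_card (union_subset (blockedAgents_mono (subset_insert j E)) fun i hi => ?_)
      simp only [W, avoidingDemand, mem_filter, mem_univ, true_and] at hi
      rw [mem_blockedAgents]
      exact ⟨not_disjoint_iff.2 ⟨j, hi.1.1, mem_insert_self j E⟩, hi.2⟩
    · refine disjoint_left.2 fun i hiB hiW => ?_
      simp only [W, mem_blockedAgents, avoidingDemand, mem_filter, mem_univ, true_and] at hiB hiW
      exact hiB.1 hiW.1.2
  unfold IsOverdemanded at hE ⊢
  rw [sum_insert hj, sum_insert hj]
  omega

variable (D) in
theorem exists_isOverdemanded_closed [Fintype α] (Q : α → ℕ) :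
    ∃ E, IsOverdemanded D Q E ∧ ∀ j ∉ E, #(avoidingDemand D E j) ≤ Q j := by
  classical
  obtain ⟨E, hE, hmax⟩ := exists_max_image ({E | IsOverdemanded D Q E} : Finset (Finset α)) card
    ⟨∅, by rw [mem_filter]; exact ⟨mem_univ _, by simp [IsOverdemanded]⟩⟩
  rw [mem_filter] at hE
  refine ⟨E, hE.2, fun j hj => ?_⟩
  by_contra! hover
  have := hmax (insert j E) (mem_filter.2 ⟨mem_univ _, hE.2.insert_of_lt hj hover⟩)
  rw [card_insert_of_notMem hj] at this
  omega

end Closure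

theorem exists_option_map_card_fiber_eq [DecidableEq ι] (r : α → ℕ) (s : Finset α) :
    ∀ V : Finset ι, #V = ∑ j ∈ s, r j →
      ∃ a : ι → Option α, (∀ i j, a i = some j → i ∈ V ∧ j ∈ s) ∧
        ∀ j ∈ s, #{i | a i = some j} = r j := by
  induction s using Finset.induction_on with
  | empty => exact fun _ _ => ⟨fun _ => none, by simp, by simp⟩
  | insert j₀ s hj₀ ih =>
    intro V hV
    rw [sum_insert hj₀] at hV
    obtain ⟨W, hWV, hW⟩ := exists_subset_card_eq (show r j₀ ≤ #V by omega)
    obtain ⟨a, ha, hfib⟩ := ih (V \ W) (by rw [card_sdiff_of_subset hWV]; omega)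
    have haW : ∀ i j, a i = some j → i ∉ W := fun i j h => (mem_sdiff.1 (ha i j h).1).2
    refine ⟨fun i => if i ∈ W then some j₀ else a i, fun i j h => ?_, fun j hj => ?_⟩
    · dsimp only at h
      split_ifs at h with hi
      · cases h; exact ⟨hWV hi, mem_insert_self _ _⟩
      · obtain ⟨hiV, hjs⟩ := ha i j h
        exact ⟨(mem_sdiff.1 hiV).1, mem_insert_of_mem hjs⟩
    · rcases mem_insert.1 hj with rfl | hjs
      · rw [← hW]
        congr 1
        ext i
        by_cases hi : i ∈ W
        · simp [hi]
        · simpa [hi] using fun h => hj₀ (ha i _ h).2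
      · rw [← hfib j hjs]
        congr 1
        ext i
        by_cases hi : i ∈ W
        · simpa [hi] using iff_of_false (by rintro rfl; exact hj₀ hjs) (haW i j · hi)
        · simp [hi]

section Unblocked

variable [DecidableEq ι] {D : ι → Finset α} {E : Finset α} {j : α}

lemma unblockedDemand_eq_singletonAgents (hj : j ∈ E) :
    unblockedDemand D E j = singletonAgents D j := by
  ext i
  simp only [unblockedDemand, singletonAgents, mem_blockedAgents, mem_filter, mem_univ, true_and]
  constructor
  · rintro ⟨hi, hjD⟩
    exact eq_singleton_of_mem_of_card_le_one hjD
      (not_lt.1 fun h => hi ⟨not_disjoint_iff.2 ⟨j, hjD, hj⟩, h⟩)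
  · rintro hD
    simp [hD]

lemma unblockedDemand_subset_avoidingDemand (hj : j ∉ E) :
    unblockedDemand D E j ⊆ avoidingDemand D E j := by
  intro i
  simp only [unblockedDemand, avoidingDemand, mem_blockedAgents, mem_filter, mem_univ, true_and]
  rintro ⟨hi, hjD⟩
  refine ⟨hjD, by_contra fun hd => ?_⟩
  rw [eq_singleton_of_mem_of_card_le_one hjD (not_lt.1 fun h => hi ⟨hd, h⟩)] at hd
  exact hd (disjoint_singleton_left.2 hj)

lemma card_unblockedDemand_le {Q : α → ℕ} (hclosed : ∀ j ∉ E, #(avoidingDemand D E j) ≤ Q j)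
    (hsing : ∀ j, #(singletonAgents D j) ≤ Q j) (j : α) : #(unblockedDemand D E j) ≤ Q j := by
  by_cases hj : j ∈ E
  · rw [unblockedDemand_eq_singletonAgents hj]
    exact hsing j
  · exact (card_le_card (unblockedDemand_subset_avoidingDemand hj)).trans (hclosed j hj)

lemma IsOverdemanded.sum_sub_add_card_le {Q : α → ℕ} (hE : IsOverdemanded D Q E)
    (hsing : ∀ j, #(singletonAgents D j) ≤ Q j) :
    ∑ j ∈ E, (Q j - #(unblockedDemand D E j)) + #E ≤ #(blockedAgents D E) := by
  have hsplit : ∑ j ∈ E, (Q j - #(unblockedDemand D E j)) + #E + ∑ j ∈ E, #(singletonAgents D j)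
      = ∑ j ∈ E, (Q j + 1) := by
    rw [card_eq_sum_ones E, ← sum_add_distrib, ← sum_add_distrib]
    refine sum_congr rfl fun j hj => ?_
    rw [unblockedDemand_eq_singletonAgents hj]
    have := hsing j
    omega
  unfold IsOverdemanded at hE
  omega

end Unblocked

lemma exists_notMem_blocked_or_disjoint {D : ι → Finset α} {E : Finset α}
    (hdem : ∀ j, ∃ i, j ∈ D i) {V : Finset ι}
    (hVB : V ⊆ blockedAgents D E) (hV : #V + #E ≤ #(blockedAgents D E)) (j : α) :
    ∃ i, i ∉ V ∧ (i ∈ blockedAgents D E ∨ Disjoint (D i) E) := by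
  rcases E.eq_empty_or_nonempty with rfl | hE
  · obtain ⟨i, -⟩ := hdem j
    exact ⟨i, fun hi => by simpa using hVB hi, Or.inr (disjoint_empty_right _)⟩
  · obtain ⟨i, hiB, hiV⟩ := exists_mem_notMem_of_card_lt_card (s := V)
      (show #V < #(blockedAgents D E) by have := hE.card_pos; omega)
    exact ⟨i, hiV, Or.inl hiB⟩

lemma discreteValue_le_discreteValue_iff {m : ℕ} {D : Finset (Fin m)} {y x : Fin m → ℕ} :
    discreteValue D y ≤ discreteValue D x ↔ ((∀ j ∈ D, 1 ≤ y j) → ∀ j ∈ D, 1 ≤ x j) := by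
  unfold discreteValue
  split_ifs with hy hx hx
  · exact iff_of_true le_rfl fun _ => hx
  · exact iff_of_false (by norm_num) fun h => hx (h hy)
  · exact iff_of_true zero_le_one fun _ => hx
  · exact iff_of_true le_rfl fun h => absurd h hy

theorem isDiscreteCAEI_of_covered_or_unaffordable {n m : ℕ} {Q : Fin m → ℕ}
    {D : Fin n → Finset (Fin m)} {p : Fin m → ℝ} {x : Fin n → Fin m → ℕ} (hp : ∀ j, 0 ≤ p j)
    (hsum : ∀ j, ∑ i, x i j = Q j) (hbudget : ∀ i, bundleCost p (x i) ≤ 1)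
    (hcov : ∀ i, (∀ j ∈ D i, 1 ≤ x i j) ∨ ∀ y, (∀ j ∈ D i, 1 ≤ y j) → 1 < bundleCost p y) :
    IsDiscreteCAEI Q D p x :=
  ⟨hp, hsum, hbudget, fun i y hy => discreteValue_le_discreteValue_iff.2 fun hcy =>
    (hcov i).resolve_right fun h => (h y hcy).not_ge hy⟩

namespace IsDiscreteCAEI

variable {n m : ℕ} {Q : Fin m → ℕ} {D : Fin n → Finset (Fin m)} {p : Fin m → ℝ}
  {x : Fin n → Fin m → ℕ} {j : Fin m}

lemma price_le_one (h : IsDiscreteCAEI Q D p x) (hQ : 1 ≤ Q j) : p j ≤ 1 := by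
  obtain ⟨i, -, hi⟩ := exists_ne_zero_of_sum_ne_zero (h.2.1 j ▸ (by omega : Q j ≠ 0))
  calc p j = ∑ k ∈ {j}, p k := (sum_singleton _ _).symm
    _ ≤ bundleCost p (x i) := sum_le_bundleCost h.1 (by simpa [Nat.one_le_iff_ne_zero] using hi)
    _ ≤ 1 := h.2.2.1 i

lemma one_le_of_eq_singleton (h : IsDiscreteCAEI Q D p x) (hQ : 1 ≤ Q j) {i : Fin n}
    (hi : D i = {j}) : 1 ≤ x i j := by
  have hcost : bundleCost p (Pi.single j 1) ≤ 1 := by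
    simpa [bundleCost, Pi.single_apply] using h.price_le_one hQ
  have hopt := discreteValue_le_discreteValue_iff.1 (h.2.2.2 i _ hcost)
  exact hopt (by simp [hi]) j (by simp [hi])

lemma card_singletonAgents_le (h : IsDiscreteCAEI Q D p x) (hQ : 1 ≤ Q j) :
    #(singletonAgents D j) ≤ Q j :=
  calc #(singletonAgents D j) = ∑ _ ∈ singletonAgents D j, 1 := card_eq_sum_ones _
    _ ≤ ∑ i ∈ singletonAgents D j, x i j :=
        sum_le_sum fun _ hi => h.one_le_of_eq_singleton hQ (mem_filter.1 hi).2
    _ ≤ ∑ i, x i j := sum_le_sum_of_subset (subset_univ _)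
    _ = Q j := h.2.1 j

end IsDiscreteCAEI

section Allocation

variable [DecidableEq ι] {D : ι → Finset α} {E : Finset α} {a : ι → Option α} {d : α → ι}
  {r : α → ℕ}

variable (D E a d r) in
/-- `a` hands out single copies of the items of `E` to blocked agents, and `d j` absorbs the `r j`
leftover copies of an item `j ∉ E`. -/
def closureAllocation (i : ι) : α → ℕ :=
  (fun j => if i ∉ blockedAgents D E ∧ j ∈ D i then 1 else 0) +
    (fun j => if j ∈ (a i).toFinset then 1 else 0) + fun j => if j ∉ E ∧ d j = i then r j else 0

lemma sum_closureAllocation (j : α) :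
    ∑ i, closureAllocation D E a d r i j =
      #(unblockedDemand D E j) + #{i | a i = some j} + if j ∈ E then 0 else r j := by
  simp only [closureAllocation, Pi.add_apply, sum_add_distrib, sum_boole, Nat.cast_id,
    Option.mem_toFinset, Option.mem_def, unblockedDemand]
  by_cases hj : j ∈ E <;> simp [hj]

lemma sum_closureAllocation_eq {Q : α → ℕ} (hcap : ∀ j, #(unblockedDemand D E j) ≤ Q j)
    (ha : ∀ i j, a i = some j → j ∈ E)
    (hfib : ∀ j ∈ E, #{i | a i = some j} = Q j - #(unblockedDemand D E j)) (j : α) :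
    ∑ i, closureAllocation D E a d (fun j => Q j - #(unblockedDemand D E j)) i j = Q j := by
  have := hcap j
  rw [sum_closureAllocation]
  by_cases hj : j ∈ E
  · rw [if_pos hj, hfib j hj]
    omega
  · rw [if_neg hj, card_eq_zero.2 (filter_eq_empty_iff.2 fun i _ h => hj (ha i j h))]
    omega

lemma one_le_closureAllocation {i : ι} (hi : i ∉ blockedAgents D E) {j : α} (hj : j ∈ D i) :
    1 ≤ closureAllocation D E a d r i j := by
  simp [closureAllocation, hi, hj, add_assoc]

end Allocation

section Budget

variable [Fintype α] [DecidableEq ι] {D : ι → Finset α} {E : Finset α} {a : ι → Option α}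
  {d : α → ι} {r : α → ℕ} {p : α → ℝ}

lemma bundleCost_closureAllocation (i : ι) :
    bundleCost p (closureAllocation D E a d r i) =
      ((if i ∈ blockedAgents D E then 0 else ∑ j ∈ D i, p j) + ∑ j ∈ (a i).toFinset, p j) +
        ∑ j, if j ∉ E ∧ d j = i then p j * r j else 0 := by
  rw [closureAllocation, bundleCost_add, bundleCost_add, bundleCost_indicator]
  congr 2
  · split_ifs with hi <;> simp [bundleCost, hi]
  · simp [bundleCost, apply_ite]

lemma bundleCost_closureAllocation_le_one {δ : ℝ} (hp1 : ∀ j, p j ≤ 1)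
    (hpδ : ∀ j ∉ E, p j = δ) (hδ0 : 0 ≤ δ) (hδ : δ * (Fintype.card α + ∑ j, (r j : ℝ)) ≤ 1)
    {V : Finset ι} (hVB : V ⊆ blockedAgents D E) (ha : ∀ i j, a i = some j → i ∈ V)
    (hd : ∀ j, d j ∉ V ∧ (d j ∈ blockedAgents D E ∨ Disjoint (D (d j)) E)) (i : ι) :
    bundleCost p (closureAllocation D E a d r i) ≤ 1 := by
  rw [bundleCost_closureAllocation]
  set own := if i ∈ blockedAgents D E then 0 else ∑ j ∈ D i, p j
  set dump := ∑ j, if j ∉ E ∧ d j = i then p j * r j else 0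
  have hr : 0 ≤ ∑ j, (r j : ℝ) := by positivity
  have hown_cheap : i ∈ blockedAgents D E ∨ Disjoint (D i) E → own ≤ δ * Fintype.card α := by
    by_cases hiB : i ∈ blockedAgents D E
    · simpa [own, hiB] using by positivity
    · rintro (hiB' | hdisj)
      · exact absurd hiB' hiB
      calc own = ∑ _ ∈ D i, δ := by
            simp only [own, if_neg hiB]
            exact sum_congr rfl fun j hj => hpδ j (disjoint_left.1 hdisj hj)
        _ ≤ δ * Fintype.card α := by
            rw [sum_const, nsmul_eq_mul, mul_comm]
            gcongr
            exact_mod_cast card_le_univ _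
  have hown : own ≤ 1 := by
    by_cases hcheap : i ∈ blockedAgents D E ∨ Disjoint (D i) E
    · nlinarith [hown_cheap hcheap]
    · have hcard : #(D i) ≤ 1 := by simp_all
      calc own = ∑ j ∈ D i, p j := if_neg fun h => hcheap (Or.inl h)
        _ ≤ #(D i) • (1 : ℝ) := sum_le_card_nsmul _ _ _ fun j _ => hp1 j
        _ ≤ 1 := by simpa using hcard
  have hdump : dump ≤ δ * ∑ j, (r j : ℝ) := by
    rw [mul_sum]
    refine sum_le_sum fun j _ => ?_
    split_ifs with h
    · rw [hpδ j h.1]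
    · positivity
  have hdump_zero : (∀ j, d j ≠ i) → dump = 0 := fun h => sum_eq_zero fun j _ => by simp [h j]
  by_cases hiV : i ∈ V
  · rw [hdump_zero fun j hj => (hd j).1 (hj ▸ hiV)]
    cases hai : a i with
    | none => simp [own, hVB hiV]
    | some j => simpa [own, hVB hiV] using hp1 j
  · have hai : a i = none := Option.eq_none_iff_forall_ne_some.2 fun j h => hiV (ha i j h)
    rw [hai, Option.toFinset_none, sum_empty, add_zero]
    by_cases hdi : ∃ j, d j = i
    · obtain ⟨j, rfl⟩ := hdi
      nlinarith [hown_cheap (hd j).2]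
    · rw [hdump_zero fun j hj => hdi ⟨j, hj⟩, add_zero]
      exact hown

end Budget

lemma one_lt_bundleCost_of_mem_blockedAgents [Fintype α] {D : ι → Finset α} {E : Finset α}
    {p : α → ℝ} (hp : ∀ j, 0 < p j) (hpE : ∀ j ∈ E, p j = 1)
    {i : ι} (hi : i ∈ blockedAgents D E) {y : α → ℕ} (hy : ∀ j ∈ D i, 1 ≤ y j) :
    1 < bundleCost p y := by
  obtain ⟨⟨j₁, hj₁D, hj₁E⟩, hcard⟩ : (∃ j ∈ D i, j ∈ E) ∧ 1 < #(D i) := by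
    simpa [not_disjoint_iff] using hi
  obtain ⟨j₂, hj₂D, hne⟩ := exists_mem_ne hcard j₁
  calc 1 < p j₁ + p j₂ := by rw [hpE j₁ hj₁E]; linarith [hp j₂]
    _ = ∑ j ∈ {j₁, j₂}, p j := (sum_pair hne.symm).symm
    _ ≤ ∑ j ∈ D i, p j :=
        sum_le_sum_of_subset_of_nonneg (insert_subset hj₁D (singleton_subset_iff.2 hj₂D))
          fun j _ _ => (hp j).le
    _ ≤ bundleCost p y := sum_le_bundleCost (fun j => (hp j).le) hy

theorem exists_isDiscreteCAEI {n m : ℕ} {Q : Fin m → ℕ} {D : Fin n → Finset (Fin m)}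
    (hdem : ∀ j, ∃ i, j ∈ D i) (hsing : ∀ j, #(singletonAgents D j) ≤ Q j) :
    ∃ p x, IsDiscreteCAEI Q D p x := by
  obtain ⟨E, hE, hclosed⟩ := exists_isOverdemanded_closed D Q
  have hcap := card_unblockedDemand_le hclosed hsing
  have hblocked := hE.sum_sub_add_card_le hsing
  obtain ⟨V, hVB, hV⟩ := exists_subset_card_eq (s := blockedAgents D E)
    (n := ∑ j ∈ E, (Q j - #(unblockedDemand D E j))) (by omega)
  set r := fun j => Q j - #(unblockedDemand D E j)
  obtain ⟨a, ha, hfib⟩ := exists_option_map_card_fiber_eq r E V hV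
  choose d hd using exists_notMem_blocked_or_disjoint hdem hVB (by omega)
  set δ : ℝ := 1 / (m + ∑ j, (r j : ℝ) + 1)
  have hr : 0 ≤ (m : ℝ) + ∑ j, (r j : ℝ) := by positivity
  have hδ : 0 < δ := by positivity
  have hδm : δ * (m + ∑ j, (r j : ℝ)) ≤ 1 := by
    rw [div_mul_eq_mul_div, one_mul, div_le_one (by positivity)]
    linarith
  have hδ1 : δ ≤ 1 := (div_le_one (by positivity)).2 (by linarith)
  set p : Fin m → ℝ := fun j => if j ∈ E then 1 else δ
  have hp : ∀ j, 0 < p j := fun j => by dsimp only [p]; split_ifs <;> positivity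
  have hp1 : ∀ j, p j ≤ 1 := fun j => by dsimp only [p]; split_ifs <;> linarith
  refine ⟨p, closureAllocation D E a d r,
    isDiscreteCAEI_of_covered_or_unaffordable (fun j => (hp j).le)
      (sum_closureAllocation_eq hcap (fun i j h => (ha i j h).2) hfib)
      (bundleCost_closureAllocation_le_one hp1 (fun j hj => if_neg hj) hδ.le (by simpa using hδm)
        hVB (fun i j h => (ha i j h).1) hd)
      fun i => ?_⟩
  by_cases hi : i ∈ blockedAgents D E
  · exact Or.inr fun y hy => one_lt_bundleCost_of_mem_blockedAgents hp (fun j hj => if_pos hj) hi hy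
  · exact Or.inl fun j hj => one_le_closureAllocation hi hj

theorem caei_exists_iff_no_singleton_overdemand_general (n m : ℕ) (Q : Fin m → ℕ)
    (D : Fin n → Finset (Fin m))
    (hQ : ∀ j, 1 ≤ Q j)
    (hdem : ∀ j : Fin m, ∃ i, j ∈ D i) :
    (∃ (p : Fin m → ℝ) (x : Fin n → Fin m → ℕ), IsDiscreteCAEI Q D p x) ↔
      ∀ j : Fin m, (Finset.univ.filter fun i => D i = {j}).card ≤ Q j :=
  ⟨fun ⟨_, _, h⟩ j => h.card_singletonAgents_le (hQ j), exists_isDiscreteCAEI hdem⟩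

/-- Characterization: a CAEI exists iff no item is over-demanded among
singleton-demand agents. -/
theorem caei_exists_iff_no_singleton_overdemand (n m : ℕ) (Q : Fin m → ℕ)
    (D : Fin n → Finset (Fin m))
    (hQ : ∀ j, 1 ≤ Q j)
    (hdem : ∀ j : Fin m, ∃ i, j ∈ D i)
    (hD : ∀ i, (D i).Nonempty) :
    (∃ (p : Fin m → ℝ) (x : Fin n → Fin m → ℕ), IsDiscreteCAEI Q D p x) ↔
      ∀ j : Fin m, (Finset.univ.filter fun i => D i = {j}).card ≤ Q j :=
  caei_exists_iff_no_singleton_overdemand_general n m Q D hQ hdem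
end

section
/- In the discrete goods setting, there exists an envy-free allocation that is not supported by any CAEI prices: with 2 agents, 4 items each in 1 copy, demands D_1 = {1,2}, D_2 = {3,4}, the allocation x_1 = {1,3}, x_2 = {2,4} is envy-free, but there is no price vector p ≥ 0 such that (x, p) is a CAEI. -/
open Finset

/-- With 2 agents, 4 unit-supply items, demands {1,2} and {3,4}, the allocation
x₁ = {1,3}, x₂ = {2,4} is envy-free but is supported by no CAEI prices. -/
theorem envy_free_not_caei_discrete :
    ∃ (D : Fin 2 → Finset (Fin 4)) (x : Fin 2 → Fin 4 → ℕ),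
      D = ![{0, 1}, {2, 3}] ∧
      x = ![(fun j => if j = 0 ∨ j = 2 then 1 else 0),
            (fun j => if j = 1 ∨ j = 3 then 1 else 0)] ∧
      (∀ i k : Fin 2, discreteValue (D i) (x k) ≤ discreteValue (D i) (x i)) ∧
      ¬ ∃ p : Fin 4 → ℝ, (∀ j, 0 ≤ p j) ∧
          (∀ i, ∑ j, p j * (x i j : ℝ) ≤ 1) ∧
          (∀ i (y : Fin 4 → ℕ), ∑ j, p j * (y j : ℝ) ≤ 1 →
            discreteValue (D i) y ≤ discreteValue (D i) (x i)) := by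
  refine ⟨![{0, 1}, {2, 3}],
    ![(fun j => if j = 0 ∨ j = 2 then 1 else 0),
      (fun j => if j = 1 ∨ j = 3 then 1 else 0)], rfl, rfl, ?_, ?_⟩
  · intro i k
    fin_cases i <;> fin_cases k <;> simp [discreteValue]
  · rintro ⟨p, hp, hbud, hopt⟩
    have hb0 := hbud 0
    have hb1 := hbud 1
    simp [Fin.sum_univ_four] at hb0 hb1
    have h0 : 1 < p 0 + p 1 := by
      by_contra h
      push_neg at h
      have := hopt 0 (fun j => if j = 0 ∨ j = 1 then 1 else 0)
        (by simp [Fin.sum_univ_four]; linarith)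
      rw [show (![({0,1} : Finset (Fin 4)), {2,3}]) 0 = {0,1} from rfl] at this
      rw [discreteValue, if_pos (by decide), discreteValue, if_neg (by decide)] at this
      linarith
    have h1 : 1 < p 2 + p 3 := by
      by_contra h
      push_neg at h
      have := hopt 1 (fun j => if j = 2 ∨ j = 3 then 1 else 0)
        (by simp [Fin.sum_univ_four]; linarith)
      rw [show (![({0,1} : Finset (Fin 4)), {2,3}]) 1 = {2,3} from rfl] at this
      rw [discreteValue, if_pos (by decide), discreteValue, if_neg (by decide)] at this
      linarith
    linarith
end

section
/- For 2 divisible goods and 2 single minded agents with demands D_1 = (0.2, 0.2) and D_2 = (0.8, 0.8), the allocation x_1 = (1, 0), x_2 = (0, 1) is envy-free, but there is no price vector (p_1, p_2) with p_1, p_2 ≥ 0 such that (x, p) is a CAEI. -/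
/-- 0/1 single minded value of a divisible bundle `z` for demand vector `v`. -/
noncomputable def smValue {m : ℕ} (v z : Fin m → ℝ) : ℝ :=
  if ∀ j, v j ≤ z j then 1 else 0

/-- Two divisible goods, demands (0.2,0.2) and (0.8,0.8): the allocation
x₁ = (1,0), x₂ = (0,1) is envy-free but admits no supporting CAEI prices. -/
theorem envy_free_not_caei_divisible :
    ∃ (v x : Fin 2 → Fin 2 → ℝ),
      v = ![![0.2, 0.2], ![0.8, 0.8]] ∧
      x = ![![1, 0], ![0, 1]] ∧
      (∀ i k : Fin 2, smValue (v i) (x k) ≤ smValue (v i) (x i)) ∧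
      ¬ ∃ p : Fin 2 → ℝ, (∀ j, 0 ≤ p j) ∧
          (∀ i, ∑ j, p j * x i j ≤ 1) ∧
          (∀ (i : Fin 2) (y : Fin 2 → ℝ), (∀ j, 0 ≤ y j ∧ y j ≤ 1) →
            ∑ j, p j * y j ≤ 1 → smValue (v i) y ≤ smValue (v i) (x i)) := by
  refine ⟨![![0.2,0.2],![0.8,0.8]], ![![1,0],![0,1]], rfl, rfl, ?_, ?_⟩
  · have h : ∀ i k : Fin 2, smValue (![![(0.2:ℝ),0.2],![0.8,0.8]] i) (![![(1:ℝ),0],![0,1]] k) = 0 := by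
      intro i k
      fin_cases i <;> fin_cases k <;> norm_num [smValue, Fin.forall_fin_two]
    intro i k
    rw [h i k, h i i]
  · rintro ⟨p, hp, hb, hd⟩
    have hb0 := hb 0
    have hb1 := hb 1
    simp [Fin.sum_univ_two] at hb0 hb1
    have key := hd 0 (fun _ => 0.2) (fun j => by norm_num)
      (by simp [Fin.sum_univ_two]; nlinarith [hp 0, hp 1])
    have h1 : smValue (![![(0.2:ℝ),0.2],![0.8,0.8]] 0) (fun _ => 0.2) = 1 := by
      rw [smValue, if_pos]
      intro j; fin_cases j <;> norm_num
    have h0 : smValue (![![(0.2:ℝ),0.2],![0.8,0.8]] 0) (![![(1:ℝ),0],![0,1]] 0) = 0 := by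
      rw [smValue, if_neg]; push_neg; exact ⟨1, by norm_num [Matrix.cons_val_one, Matrix.head_cons, Matrix.cons_val_zero]⟩
    rw [h1, h0] at key
    linarith
end

section
/- Reduction correctness for hardness of welfare maximization: given a collection C_1, ..., C_n of finite subsets of {1,...,m}, the constructed fair division instance with agents {1,...,n}, items {1,...,m+n} each in one unit, and demand of agent i being 100% of each item in C_i ∪ {m+i}, admits an allocation in which at least K agents receive their full demand if and only if the collection contains at least K mutually disjoint sets. -/
open Finset
open scoped Classical

/-!
Two agents can both be fully served only if their demands are disjoint, since an item of which
both receive all of its unit would be handed out twice; conversely, a family with pairwise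
disjoint demands is fully served by giving each of its agents exactly its demand. In the
constructed instance the private items make the demands of two distinct agents disjoint exactly
when their sets `C i` are, so satisfied coalitions are precisely set packings.
-/

lemma eq_of_apply_eq_one_of_sum_le_one {ι : Type*} {s : Finset ι} {y : ι → ℝ}
    (hy : ∀ i, 0 ≤ y i) (hsum : ∑ i ∈ s, y i ≤ 1) {i k : ι} (hi : i ∈ s) (hk : k ∈ s)
    (hyi : y i = 1) (hyk : y k = 1) : i = k := by
  by_contra hik
  have hpair : ∑ t ∈ {i, k}, y t ≤ ∑ t ∈ s, y t :=
    sum_le_sum_of_subset_of_nonneg (insert_subset hi (singleton_subset_iff.2 hk))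
      fun t _ _ => hy t
  rw [sum_pair hik, hyi, hyk] at hpair
  linarith

section Allocation

variable {ι α : Type*} [Fintype ι] (D : ι → Finset α)

noncomputable def satisfiedAgents (x : ι → α → ℝ) : Finset ι :=
  univ.filter fun i => ∀ j ∈ D i, x i j = 1

noncomputable def indicatorAllocation (S : Finset ι) (i : ι) (j : α) : ℝ :=
  if i ∈ S ∧ j ∈ D i then 1 else 0

variable {D}

lemma pairwiseDisjoint_satisfiedAgents {x : ι → α → ℝ} (hx : ∀ i j, 0 ≤ x i j)
    (hsum : ∀ j, ∑ i, x i j ≤ 1) : (satisfiedAgents D x : Set ι).PairwiseDisjoint D := by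
  intro i hi k hk hik
  simp only [satisfiedAgents, coe_filter, mem_univ, true_and] at hi hk
  exact disjoint_left.2 fun j hji hjk =>
    hik (eq_of_apply_eq_one_of_sum_le_one (fun t => hx t j) (hsum j) (mem_univ i) (mem_univ k)
      (hi j hji) (hk j hjk))

lemma sum_indicatorAllocation_le_one {S : Finset ι} (hS : (S : Set ι).PairwiseDisjoint D)
    (j : α) : ∑ i, indicatorAllocation D S i j ≤ 1 := by
  simp only [indicatorAllocation, sum_boole]
  refine Nat.cast_le_one.2 (card_le_one.2 fun i hi k hk => ?_)
  simp only [mem_filter, mem_univ, true_and] at hi hk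
  by_contra hik
  exact disjoint_left.1 (hS hi.1 hk.1 hik) hi.2 hk.2

lemma subset_satisfiedAgents_indicatorAllocation (S : Finset ι) :
    S ⊆ satisfiedAgents D (indicatorAllocation D S) := fun i hi =>
  mem_filter.2 ⟨mem_univ i, fun _ hj => if_pos ⟨hi, hj⟩⟩

variable (D) in
theorem exists_allocation_satisfying_iff (K : ℕ) :
    (∃ x : ι → α → ℝ, (∀ i j, 0 ≤ x i j) ∧ (∀ j, ∑ i, x i j ≤ 1) ∧
        K ≤ #(satisfiedAgents D x)) ↔
      ∃ S : Finset ι, (S : Set ι).PairwiseDisjoint D ∧ K ≤ #S := by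
  constructor
  · rintro ⟨x, hx, hsum, hK⟩
    exact ⟨_, pairwiseDisjoint_satisfiedAgents hx hsum, hK⟩
  · rintro ⟨S, hS, hK⟩
    refine ⟨indicatorAllocation D S, fun i j => ?_, sum_indicatorAllocation_le_one hS,
      hK.trans (card_le_card (subset_satisfiedAgents_indicatorAllocation S))⟩
    unfold indicatorAllocation
    positivity

end Allocation

lemma disjoint_image_union_singleton_iff {α β ι : Type*} [DecidableEq α] {f : β → α}
    {g : ι → α} (hf : Function.Injective f) (hg : Function.Injective g)
    (hfg : ∀ b i, f b ≠ g i) {s t : Finset β} {i k : ι} (hik : i ≠ k) :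
    Disjoint (s.image f ∪ {g i}) (t.image f ∪ {g k}) ↔ Disjoint s t := by
  simp [disjoint_image hf, hfg, (hg.ne hik).symm]

lemma castAdd_ne_natAdd {m n : ℕ} (a : Fin m) (i : Fin n) :
    Fin.castAdd n a ≠ Fin.natAdd m i := by
  rw [Ne, Fin.ext_iff, Fin.val_castAdd, Fin.val_natAdd]
  omega

/-- Set packing reduction correctness: the fair division instance with items
Fin (m+n), where agent i demands all of each item in C i (embedded) plus its
private item m+i, admits an allocation satisfying at least K agents iff the
collection contains at least K mutually disjoint sets. -/
theorem set_packing_reduction (n m K : ℕ) (C : Fin n → Finset (Fin m)) :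
    (∃ x : Fin n → Fin (m + n) → ℝ,
        (∀ i j, 0 ≤ x i j) ∧
        (∀ j, ∑ i, x i j ≤ 1) ∧
        K ≤ (Finset.univ.filter fun i : Fin n =>
          ∀ j ∈ (C i).image (Fin.castAdd n) ∪ {Fin.natAdd m i}, x i j = 1).card) ↔
      (∃ S : Finset (Fin n),
        (∀ i ∈ S, ∀ k ∈ S, i ≠ k → Disjoint (C i) (C k)) ∧ K ≤ S.card) := by
  have hpacking (S : Finset (Fin n)) :
      (S : Set (Fin n)).PairwiseDisjoint
          (fun i => (C i).image (Fin.castAdd n) ∪ {Fin.natAdd m i}) ↔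
        ∀ i ∈ S, ∀ k ∈ S, i ≠ k → Disjoint (C i) (C k) :=
    forall₂_congr fun i _ => forall₂_congr fun k _ => forall_congr' fun hik =>
      disjoint_image_union_singleton_iff (Fin.castAdd_injective m n) (Fin.natAdd_injective n m)
        castAdd_ne_natAdd hik
  have h := (exists_allocation_satisfying_iff
    (fun i => (C i).image (Fin.castAdd n) ∪ {Fin.natAdd m i}) K).trans
      (exists_congr fun S => and_congr_left' (hpacking S))
  unfold satisfiedAgents at h
  -- the two filters differ only in their decidability instances
  convert h
end

section
/- In cake cutting with two single minded agents demanding D_1 = [0, 0.4] and D_2 = [0.4, 1], the envy-free allocation x_1 = [0, 0.2] ∪ [0.4, 0.7], x_2 = [0.2, 0.4] ∪ [0.7, 1] admits no supporting CAEI price density: there is no integrable p ≥ 0 on [0,1] with p(x_1) ≤ 1, p(x_2) ≤ 1, p(D_1) > 1, and p(D_2) > 1. -/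
/-!
Cut the cake at 0.2, 0.4 and 0.7 into pieces with prices p₁, p₂, p₃, p₄. Each agent's piece
and each demanded interval is a union of two of these pieces, so the budget constraints read
p₁ + p₃ ≤ 1 and p₂ + p₄ ≤ 1, while the demands require p₁ + p₂ > 1 and p₃ + p₄ > 1.
Summing, the total price of the cake would be both ≤ 2 and > 2.
-/

open MeasureTheory Set

section

variable {α : Type*} [LinearOrder α] [MeasurableSpace α] {μ : Measure α} [NullSingletonClass μ]
  {a b c d : α}

lemma aedisjoint_Icc_Icc (hbc : b ≤ c) : AEDisjoint μ (Icc a b) (Icc c d) :=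
  measure_mono_null (fun _ hx => le_antisymm hx.1.2 (hbc.trans hx.2.1)) (measure_singleton b)

variable [TopologicalSpace α] [OrderClosedTopology α] [OpensMeasurableSpace α] {f : α → ℝ}

lemma setIntegral_Icc_union_Icc (hbc : b ≤ c) (hab : IntegrableOn f (Icc a b) μ)
    (hcd : IntegrableOn f (Icc c d) μ) :
    ∫ x in Icc a b ∪ Icc c d, f x ∂μ = (∫ x in Icc a b, f x ∂μ) + ∫ x in Icc c d, f x ∂μ :=
  setIntegral_union₀ (aedisjoint_Icc_Icc hbc) measurableSet_Icc.nullMeasurableSet hab hcd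

lemma setIntegral_Icc_eq_add (hab : a ≤ b) (hbc : b ≤ c) (hf : IntegrableOn f (Icc a c) μ) :
    ∫ x in Icc a c, f x ∂μ = (∫ x in Icc a b, f x ∂μ) + ∫ x in Icc b c, f x ∂μ := by
  rw [← Icc_union_Icc_eq_Icc hab hbc]
  exact setIntegral_Icc_union_Icc le_rfl (hf.mono_set (Icc_subset_Icc le_rfl hbc))
    (hf.mono_set (Icc_subset_Icc hab le_rfl))

end

/-- In cake cutting with demands D₁ = [0,0.4], D₂ = [0.4,1], the envy-free
allocation x₁ = [0,0.2] ∪ [0.4,0.7], x₂ = [0.2,0.4] ∪ [0.7,1] admits no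
supporting CAEI price density. -/
theorem cake_envy_free_no_caei_prices :
    ¬ ∃ p : ℝ → ℝ,
      IntegrableOn p (Icc (0 : ℝ) 1) ∧
      (∀ t, 0 ≤ p t) ∧
      (∫ t in Icc (0 : ℝ) 0.2 ∪ Icc 0.4 0.7, p t) ≤ 1 ∧
      (∫ t in Icc (0.2 : ℝ) 0.4 ∪ Icc 0.7 1, p t) ≤ 1 ∧
      1 < (∫ t in Icc (0 : ℝ) 0.4, p t) ∧
      1 < (∫ t in Icc (0.4 : ℝ) 1, p t) := by
  rintro ⟨p, hp, -, hx₁, hx₂, hD₁, hD₂⟩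
  have hp_Icc : ∀ {a b : ℝ}, 0 ≤ a → b ≤ 1 → IntegrableOn p (Icc a b) := fun ha hb =>
    hp.mono_set (Icc_subset_Icc ha hb)
  rw [setIntegral_Icc_union_Icc (by norm_num) (hp_Icc (by norm_num) (by norm_num))
    (hp_Icc (by norm_num) (by norm_num))] at hx₁ hx₂
  rw [setIntegral_Icc_eq_add (b := 0.2) (by norm_num) (by norm_num)
    (hp_Icc (by norm_num) (by norm_num))] at hD₁
  rw [setIntegral_Icc_eq_add (b := 0.7) (by norm_num) (by norm_num)
    (hp_Icc (by norm_num) (by norm_num))] at hD₂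
  linarith
end

section
/- If the floor-rounding of a divisible CAEI is applied to a discrete instance, the welfare is preserved: given a CAEI (x, p) for the divisible instance derived from a discrete instance with quantities Q_j (agent i demands fraction 1/Q_j of good j for each j in D_i), the discrete allocation giving agent i exactly floor(x_{i,j} · Q_j) copies of item j is feasible and satisfies exactly the same set of agents. -/
open Finset
open scoped Classical

/-- Floor-rounding a divisible CAEI to the discrete instance is feasible and
satisfies exactly the same set of agents. -/
theorem rounding_preserves_welfare (n m : ℕ) (Q : Fin m → ℕ)
    (hQ : ∀ j, 1 ≤ Q j) (D : Fin n → Finset (Fin m))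
    (x : Fin n → Fin m → ℝ) (p : Fin m → ℝ)
    (hx0 : ∀ i j, 0 ≤ x i j)
    (hsupply : ∀ j, ∑ i, x i j ≤ 1)
    (hp : ∀ j, 0 ≤ p j)
    (hbudget : ∀ i, ∑ j, p j * x i j ≤ 1)
    (hopt : ∀ (i : Fin n) (y : Fin m → ℝ), (∀ j, 0 ≤ y j ∧ y j ≤ 1) →
      ∑ j, p j * y j ≤ 1 →
      (if ∀ j ∈ D i, 1 / (Q j : ℝ) ≤ y j then (1 : ℝ) else 0) ≤
        (if ∀ j ∈ D i, 1 / (Q j : ℝ) ≤ x i j then (1 : ℝ) else 0)) :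
    (∀ j, ∑ i, ⌊x i j * (Q j : ℝ)⌋₊ ≤ Q j) ∧
      (∀ i, (∀ j ∈ D i, 1 / (Q j : ℝ) ≤ x i j) ↔
        (∀ j ∈ D i, 1 ≤ ⌊x i j * (Q j : ℝ)⌋₊)) := by
  have hQpos : ∀ j, (0 : ℝ) < (Q j : ℝ) := fun j => by
    exact_mod_cast Nat.lt_of_lt_of_le Nat.zero_lt_one (hQ j)
  constructor
  · intro j
    have : ((∑ i, ⌊x i j * (Q j : ℝ)⌋₊ : ℕ) : ℝ) ≤ (Q j : ℝ) := by
      push_cast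
      calc (∑ i, (⌊x i j * (Q j : ℝ)⌋₊ : ℝ))
          ≤ ∑ i, x i j * (Q j : ℝ) := by
            apply Finset.sum_le_sum
            intro i _
            exact Nat.floor_le (mul_nonneg (hx0 i j) (hQpos j).le)
        _ = (∑ i, x i j) * (Q j : ℝ) := by rw [Finset.sum_mul]
        _ ≤ 1 * (Q j : ℝ) := by
            exact mul_le_mul_of_nonneg_right (hsupply j) (hQpos j).le
        _ = (Q j : ℝ) := one_mul _
    exact_mod_cast this
  · intro i
    constructor
    · intro h j hj
      have hx := h j hj
      have : (1 : ℝ) ≤ x i j * (Q j : ℝ) := by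
        rw [div_le_iff₀ (hQpos j)] at hx
        linarith
      exact (Nat.one_le_floor_iff _).mpr this
    · intro h j hj
      have hx := h j hj
      have h1 : (1 : ℝ) ≤ x i j * (Q j : ℝ) := (Nat.one_le_floor_iff _).mp hx
      rw [div_le_iff₀ (hQpos j)]
      linarith
end
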